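/- arXiv:2310.03774 — 3 statements merged into one kernel-verified Lean document; each statement's English description precedes it below -/
import Mathlib

section
/- Let f : ℝ → ℝⁿ be bounded and measurable with f(s) = 0 for all s < 0, let x_0 ∈ ℝⁿ, and define x(t) = exp(tΛ)·x_0 + ∫₀ᵗ exp((t−s)Λ)·f(s−τ) ds for t ≥ 0. Then for every t ≥ 0, x(t+τ) = exp(τΛ)·( x(t) + ∫_{t−τ}^{t} exp((t−s−τ)Λ)·f(s) ds ). -/
open Matrix MeasureTheory
open scoped Matrix

noncomputable section

def mexp {n : ℕ} (A : Matrix (Fin n) (Fin n) ℝ) : Matrix (Fin n) (Fin n) ℝ :=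
  NormedSpace.exp A

/-!
Substituting `u = s - τ` writes `x T` as `exp(TΛ)·x₀ + ∫_{-τ}^{T-τ} exp((T-τ-u)Λ)·f(u) du`.
By the semigroup law `exp(aΛ)·exp(bΛ) = exp((a+b)Λ)`, multiplying `x t` by `exp(τΛ)` turns
the kernel into `exp((t-u)Λ)` on `[-τ, t-τ]`, and the correction integral supplies the same
kernel on `[t-τ, t]`; together they give the integral over `[-τ, t]` that appears in `x (t+τ)`.
-/

lemma continuous_mexp {n : ℕ} : Continuous (mexp : Matrix (Fin n) (Fin n) ℝ → _) :=
  open scoped Norms.Operator in NormedSpace.exp_continuous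

lemma mexp_smul_mul_mexp_smul {n : ℕ} (Λ : Matrix (Fin n) (Fin n) ℝ) (a b : ℝ) :
    mexp (a • Λ) * mexp (b • Λ) = mexp ((a + b) • Λ) := by
  rw [add_smul, mexp, mexp, mexp, Matrix.exp_add_of_commute]
  exact ((Commute.refl Λ).smul_left a).smul_right b

lemma intervalIntegrable_of_norm_le {E : Type*} [NormedAddCommGroup E] {g : ℝ → E} {C a b : ℝ}
    (hg : AEStronglyMeasurable g) (hC : ∀ s, ‖g s‖ ≤ C) : IntervalIntegrable g volume a b :=
  (intervalIntegrable_const (c := C)).mono_fun hg.restrict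
    (Filter.Eventually.of_forall fun s => (hC s).trans (le_abs_self C))

lemma Matrix.intervalIntegrable_mulVec {ι : Type*} [Fintype ι] {M : ℝ → Matrix ι ι ℝ}
    {g : ℝ → ι → ℝ} {a b : ℝ} (hM : Continuous M) (hg : IntervalIntegrable g volume a b) :
    IntervalIntegrable (fun s => M s *ᵥ g s) volume a b := by
  simp_rw [mulVec_eq_sum, op_smul_eq_smul]
  have h := IntervalIntegrable.sum Finset.univ fun j _ =>
    IntervalIntegrable.smul_continuousOn ⟨hg.1.eval j, hg.2.eval j⟩
      ((continuous_apply j).comp hM.matrix_transpose).continuousOn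
  rwa [Finset.sum_fn] at h

lemma Matrix.mulVec_intervalIntegral {ι : Type*} [Fintype ι] (M : Matrix ι ι ℝ) {g : ℝ → ι → ℝ}
    {a b : ℝ} (hg : IntervalIntegrable g volume a b) :
    M *ᵥ ∫ s in a..b, g s = ∫ s in a..b, M *ᵥ g s :=
  ((Matrix.mulVecLin M).toContinuousLinearMap.intervalIntegral_comp_comm hg).symm

lemma intervalIntegrable_mexp_mulVec {n : ℕ} (Λ : Matrix (Fin n) (Fin n) ℝ) (T : ℝ)
    {g : ℝ → Fin n → ℝ} {a b : ℝ} (hg : IntervalIntegrable g volume a b) :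
    IntervalIntegrable (fun s => mexp ((T - s) • Λ) *ᵥ g s) volume a b :=
  Matrix.intervalIntegrable_mulVec (continuous_mexp.comp (by fun_prop)) hg

lemma mexp_mulVec_integral_mexp_mulVec {n : ℕ} (Λ : Matrix (Fin n) (Fin n) ℝ) (τ T : ℝ)
    {g : ℝ → Fin n → ℝ} {a b : ℝ} (hg : IntervalIntegrable g volume a b) :
    mexp (τ • Λ) *ᵥ ∫ s in a..b, mexp ((T - s) • Λ) *ᵥ g s =
      ∫ s in a..b, mexp ((T + τ - s) • Λ) *ᵥ g s := by
  rw [Matrix.mulVec_intervalIntegral _ (intervalIntegrable_mexp_mulVec Λ T hg)]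
  simp_rw [mulVec_mulVec, mexp_smul_mul_mexp_smul, add_sub_right_comm, add_comm τ]

lemma integral_mexp_mulVec_comp_sub {n : ℕ} (Λ : Matrix (Fin n) (Fin n) ℝ)
    (g : ℝ → Fin n → ℝ) (T τ : ℝ) :
    ∫ s in (0:ℝ)..T, mexp ((T - s) • Λ) *ᵥ g (s - τ) =
      ∫ u in -τ..T - τ, mexp ((T - τ - u) • Λ) *ᵥ g u := by
  rw [← zero_sub, ← intervalIntegral.integral_comp_sub_right]
  simp_rw [sub_sub_sub_cancel_right]

theorem statement_1_general {n : ℕ} (Λ : Matrix (Fin n) (Fin n) ℝ) (τ : ℝ) (hτ : 0 ≤ τ)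
    (f : ℝ → Fin n → ℝ) (hf : Measurable f) (hfb : ∃ C, ∀ s, ‖f s‖ ≤ C)
    (x0 : Fin n → ℝ) (x : ℝ → Fin n → ℝ)
    (hx : ∀ t, 0 ≤ t → x t = (mexp (t • Λ)).mulVec x0 +
      ∫ s in (0:ℝ)..t, (mexp ((t - s) • Λ)).mulVec (f (s - τ))) :
    ∀ t, 0 ≤ t →
      x (t + τ) = (mexp (τ • Λ)).mulVec
        (x t + ∫ s in (t - τ)..t, (mexp ((t - s - τ) • Λ)).mulVec (f s)) := by
  intro t ht
  obtain ⟨C, hC⟩ := hfb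
  have hx' : ∀ T, 0 ≤ T →
      x T = mexp (T • Λ) *ᵥ x0 + ∫ u in -τ..T - τ, mexp ((T - τ - u) • Λ) *ᵥ f u :=
    fun T hT => by rw [hx T hT, integral_mexp_mulVec_comp_sub]
  have hfi : ∀ a b, IntervalIntegrable f volume a b := fun _ _ =>
    intervalIntegrable_of_norm_le hf.aestronglyMeasurable hC
  calc x (t + τ) = mexp ((τ + t) • Λ) *ᵥ x0 + ∫ u in -τ..t, mexp ((t - u) • Λ) *ᵥ f u := by
        rw [hx' _ (by linarith), add_sub_cancel_right, add_comm τ]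
    _ = mexp (τ • Λ) *ᵥ
          (mexp (t • Λ) *ᵥ x0 + ∫ u in -τ..t, mexp ((t - τ - u) • Λ) *ᵥ f u) := by
        rw [mulVec_add, mulVec_mulVec, mexp_smul_mul_mexp_smul,
          mexp_mulVec_integral_mexp_mulVec Λ τ _ (hfi _ _), sub_add_cancel]
    _ = _ := by
        rw [hx' t ht, add_assoc]
        simp_rw [sub_right_comm t _ τ]
        rw [intervalIntegral.integral_add_adjacent_intervals
          (intervalIntegrable_mexp_mulVec Λ _ (hfi _ _))
          (intervalIntegrable_mexp_mulVec Λ _ (hfi _ _))]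

/-- If `f : ℝ → ℝⁿ` is bounded and measurable with `f s = 0` for `s < 0`, and
`x t = exp(tΛ)·x₀ + ∫₀ᵗ exp((t−s)Λ)·f(s−τ) ds` for `t ≥ 0`, then for every `t ≥ 0`,
`x(t+τ) = exp(τΛ)·( x t + ∫_{t−τ}^{t} exp((t−s−τ)Λ)·f s ds )`. -/
theorem statement_1 {n : ℕ} (Λ : Matrix (Fin n) (Fin n) ℝ) (τ : ℝ) (hτ : 0 ≤ τ)
    (f : ℝ → Fin n → ℝ) (hf : Measurable f) (hfb : ∃ C, ∀ s, ‖f s‖ ≤ C)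
    (hf0 : ∀ s < 0, f s = 0) (x0 : Fin n → ℝ) (x : ℝ → Fin n → ℝ)
    (hx : ∀ t, 0 ≤ t → x t = (mexp (t • Λ)).mulVec x0 +
      ∫ s in (0:ℝ)..t, (mexp ((t - s) • Λ)).mulVec (f (s - τ))) :
    ∀ t, 0 ≤ t →
      x (t + τ) = (mexp (τ • Λ)).mulVec
        (x t + ∫ s in (t - τ)..t, (mexp ((t - s - τ) • Λ)).mulVec (f s)) :=
  statement_1_general Λ τ hτ f hf hfb x0 x hx
end
end

section
/- Let u = (u_1,…,u_n) be an admissible control profile of the delayed game with trajectory x_u from x_0 ∈ ℝⁿ, and define y(t) = x_u(t) + ∫_{t−τ}^{t} exp((t−s−τ)Λ)·(∑_{j=1}^n B_j·u_j(s)) ds. Then for every player i the stubborn cost satisfies J̃_i(u) = (exp(τΛ)·y(T) − x_0)ᵀ·W_i·(exp(τΛ)·y(T) − x_0) + ((1−ω_i)/d_i)·y(T)ᵀ·L̂_i·y(T) + ∫₀ᵀ r_i·u_i(t)² dt = y(T)ᵀ·Ŵ_i·y(T) − 2·y(T)ᵀ·exp(τΛᵀ)·W_i·x_0 + x_0ᵀ·W_i·x_0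 + ((1−ω_i)/d_i)·y(T)ᵀ·L̂_i·y(T) + ∫₀ᵀ r_i·u_i(t)² dt. -/
open Matrix MeasureTheory
open scoped Matrix

noncomputable section

/-- An admissible control of the delayed game: a bounded measurable function `u : ℝ → ℝ`
with `u s = 0` for `s < 0`. -/
def AdmissibleD (u : ℝ → ℝ) : Prop :=
  Measurable u ∧ (∃ C, ∀ s, |u s| ≤ C) ∧ ∀ s < 0, u s = 0

/-- An admissible control of the delay-free game: a bounded measurable function. -/
def AdmissibleF (u : ℝ → ℝ) : Prop :=
  Measurable u ∧ ∃ C, ∀ s, |u s| ≤ C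

/-- Data of the differential games of opinion formation: the system matrix `Λ`
(the continuous-time Hegselmann–Krause matrix `Λ = D⁻¹A − I`), the input delay `τ`,
the terminal time `tf`, and for each player `i` the input vector `B i`, the control
weight `r i`, the neighborhood size `d i = |𝒩ᵢ|`, the agent-`i` graph Laplacian `L i`
and the stubbornness coefficient `ω i`. -/
structure GameData (n : ℕ) where
  Λ : Matrix (Fin n) (Fin n) ℝ
  τ : ℝ
  tf : ℝ
  B : Fin n → Fin n → ℝ
  r : Fin n → ℝ
  d : Fin n → ℝ
  L : Fin n → Matrix (Fin n) (Fin n) ℝ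
  ω : Fin n → ℝ

namespace GameData

variable {n : ℕ} (G : GameData n)

/-- The standing hypotheses: `τ ≥ 0`, `t_f > τ`, `rᵢ > 0`, `dᵢ > 0`, each `Lᵢ` symmetric
positive semidefinite, and `ωᵢ ∈ [0,1]`. -/
def Valid : Prop :=
  0 ≤ G.τ ∧ G.τ < G.tf ∧ (∀ i, 0 < G.r i) ∧ (∀ i, 0 < G.d i) ∧
    (∀ i, (G.L i).PosSemidef) ∧ ∀ i, G.ω i ∈ Set.Icc (0 : ℝ) 1

/-- `T = t_f − τ`. -/
def T : ℝ := G.tf - G.τ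

/-- `B̂ᵢ = exp(−τΛ)·Bᵢ`. -/
def Bhat (i : Fin n) : Fin n → ℝ := (mexp ((-G.τ) • G.Λ)).mulVec (G.B i)

/-- `L̂ᵢ = exp(τΛᵀ)·Lᵢ·exp(τΛ)`. -/
def Lhat (i : Fin n) : Matrix (Fin n) (Fin n) ℝ :=
  mexp (G.τ • G.Λᵀ) * G.L i * mexp (G.τ • G.Λ)

/-- `Sᵢ = (1/rᵢ)·B̂ᵢ·B̂ᵢᵀ`. -/
def S (i : Fin n) : Matrix (Fin n) (Fin n) ℝ :=
  (1 / G.r i) • vecMulVec (G.Bhat i) (G.Bhat i)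

/-- The matrix `∫₀ᵗ exp((t−s)Λ)·Sᵢ·exp((T−s)Λᵀ) ds` (entrywise integral). -/
def Phi (T' : ℝ) (i : Fin n) (t : ℝ) : Matrix (Fin n) (Fin n) ℝ :=
  Matrix.of fun a b =>
    ∫ s in (0:ℝ)..t, (mexp ((t - s) • G.Λ) * G.S i * mexp ((T' - s) • G.Λᵀ)) a b

/-- `Ψᵢ = ∫₀ᵀ exp((T−s)Λ)·Sᵢ·exp((T−s)Λᵀ) ds` with `T = t_f − τ`. -/
def Psi (i : Fin n) : Matrix (Fin n) (Fin n) ℝ := G.Phi G.T i G.T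

/-- `H = I + ∑ⱼ (1/dⱼ)·Ψⱼ·L̂ⱼ`. -/
def H : Matrix (Fin n) (Fin n) ℝ :=
  1 + ∑ j : Fin n, (1 / G.d j) • (G.Psi j * G.Lhat j)

/-- `Wᵢ`: the matrix whose `(i,i)` entry is `ωᵢ` and all other entries are `0`. -/
def W (i : Fin n) : Matrix (Fin n) (Fin n) ℝ := Matrix.single i i (G.ω i)

/-- `Ŵᵢ = exp(τΛᵀ)·Wᵢ·exp(τΛ)`. -/
def What (i : Fin n) : Matrix (Fin n) (Fin n) ℝ :=
  mexp (G.τ • G.Λᵀ) * G.W i * mexp (G.τ • G.Λ)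

/-- `Ĥ = I + ∑ⱼ Ψⱼ·(Ŵⱼ + ((1−ωⱼ)/dⱼ)·L̂ⱼ)`. -/
def Hhat : Matrix (Fin n) (Fin n) ℝ :=
  1 + ∑ j : Fin n, G.Psi j * (G.What j + ((1 - G.ω j) / G.d j) • G.Lhat j)

/-- The trajectory of the delayed game:
`x_u(t) = exp(tΛ)·x₀ + ∫₀ᵗ exp((t−s)Λ)·(∑ⱼ Bⱼ·uⱼ(s−τ)) ds`. -/
def xtraj (x0 : Fin n → ℝ) (u : Fin n → ℝ → ℝ) (t : ℝ) : Fin n → ℝ :=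
  (mexp (t • G.Λ)).mulVec x0 +
    ∫ s in (0:ℝ)..t, (mexp ((t - s) • G.Λ)).mulVec (∑ j : Fin n, u j (s - G.τ) • G.B j)

/-- The trajectory of the delay-free game:
`y_u(t) = exp(tΛ)·y₀ + ∫₀ᵗ exp((t−s)Λ)·(∑ⱼ B̂ⱼ·uⱼ(s)) ds`. -/
def ytraj (y0 : Fin n → ℝ) (u : Fin n → ℝ → ℝ) (t : ℝ) : Fin n → ℝ :=
  (mexp (t • G.Λ)).mulVec y0 +
    ∫ s in (0:ℝ)..t, (mexp ((t - s) • G.Λ)).mulVec (∑ j : Fin n, u j s • G.Bhat j)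

/-- Player `i`'s cost in the delayed game:
`Jᵢ(u) = (1/dᵢ)·x_u(t_f)ᵀ·Lᵢ·x_u(t_f) + ∫₀^{t_f} rᵢ·uᵢ(t−τ)² dt`. -/
def J (x0 : Fin n → ℝ) (i : Fin n) (u : Fin n → ℝ → ℝ) : ℝ :=
  (1 / G.d i) * (G.xtraj x0 u G.tf ⬝ᵥ (G.L i).mulVec (G.xtraj x0 u G.tf)) +
    ∫ t in (0:ℝ)..G.tf, G.r i * u i (t - G.τ) ^ 2

/-- Player `i`'s cost in the delay-free game:
`Ĵᵢ(u) = (1/dᵢ)·y_u(T)ᵀ·L̂ᵢ·y_u(T) + ∫₀ᵀ rᵢ·uᵢ(t)² dt`. -/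
def JF (y0 : Fin n → ℝ) (i : Fin n) (u : Fin n → ℝ → ℝ) : ℝ :=
  (1 / G.d i) * (G.ytraj y0 u G.T ⬝ᵥ (G.Lhat i).mulVec (G.ytraj y0 u G.T)) +
    ∫ t in (0:ℝ)..G.T, G.r i * u i t ^ 2

/-- Player `i`'s stubborn cost in the delayed game. -/
def Jstub (x0 : Fin n → ℝ) (i : Fin n) (u : Fin n → ℝ → ℝ) : ℝ :=
  (G.xtraj x0 u G.tf - x0) ⬝ᵥ (G.W i).mulVec (G.xtraj x0 u G.tf - x0) +
    ((1 - G.ω i) / G.d i) * (G.xtraj x0 u G.tf ⬝ᵥ (G.L i).mulVec (G.xtraj x0 u G.tf)) +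
    ∫ t in (0:ℝ)..G.tf, G.r i * u i (t - G.τ) ^ 2

/-- Player `i`'s stubborn cost in the delay-free game, with reference opinion `x₀`. -/
def JstubF (x0 y0 : Fin n → ℝ) (i : Fin n) (u : Fin n → ℝ → ℝ) : ℝ :=
  ((mexp (G.τ • G.Λ)).mulVec (G.ytraj y0 u G.T) - x0) ⬝ᵥ
      (G.W i).mulVec ((mexp (G.τ • G.Λ)).mulVec (G.ytraj y0 u G.T) - x0) +
    ((1 - G.ω i) / G.d i) * (G.ytraj y0 u G.T ⬝ᵥ (G.Lhat i).mulVec (G.ytraj y0 u G.T)) +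
    ∫ t in (0:ℝ)..G.T, G.r i * u i t ^ 2

/-- Open-loop Nash equilibrium of the delayed game. -/
def NashD (x0 : Fin n → ℝ) (u : Fin n → ℝ → ℝ) : Prop :=
  (∀ i, AdmissibleD (u i)) ∧
    ∀ i, ∀ v : ℝ → ℝ, AdmissibleD v →
      G.J x0 i u ≤ G.J x0 i (Function.update u i v)

/-- Open-loop Nash equilibrium of the delay-free game. -/
def NashF (y0 : Fin n → ℝ) (u : Fin n → ℝ → ℝ) : Prop :=
  (∀ i, AdmissibleF (u i)) ∧
    ∀ i, ∀ v : ℝ → ℝ, AdmissibleF v →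
      G.JF y0 i u ≤ G.JF y0 i (Function.update u i v)

/-- Open-loop Nash equilibrium of the stubborn delayed game. -/
def NashStubD (x0 : Fin n → ℝ) (u : Fin n → ℝ → ℝ) : Prop :=
  (∀ i, AdmissibleD (u i)) ∧
    ∀ i, ∀ v : ℝ → ℝ, AdmissibleD v →
      G.Jstub x0 i u ≤ G.Jstub x0 i (Function.update u i v)

/-- Open-loop Nash equilibrium of the stubborn delay-free game. -/
def NashStubF (x0 y0 : Fin n → ℝ) (u : Fin n → ℝ → ℝ) : Prop :=
  (∀ i, AdmissibleF (u i)) ∧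
    ∀ i, ∀ v : ℝ → ℝ, AdmissibleF v →
      G.JstubF x0 y0 i u ≤ G.JstubF x0 y0 i (Function.update u i v)

end GameData

/-!
Substituting `s ↦ s - τ` in the variation-of-constants formula writes both `exp(τΛ)·y(T)` and
`x_u(t_f)` as `exp(t_f Λ)·x₀ + ∫_{-τ}^{T} exp((T - s)Λ)·∑ⱼ Bⱼ uⱼ(s) ds`; the same substitution
turns the control cost into an integral over `[-τ, T]`, whose part over `[-τ, 0]` vanishes since
admissible controls are zero at negative times. The remaining identities are matrix algebra with
`exp(τΛ)ᵀ = exp(τΛᵀ)` and the symmetry of `Wᵢ`.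
-/

lemma mexp_add_smul {n : ℕ} (A : Matrix (Fin n) (Fin n) ℝ) (a b : ℝ) :
    mexp ((a + b) • A) = mexp (a • A) * mexp (b • A) := by
  rw [add_smul]
  exact Matrix.exp_add_of_commute _ _ (((Commute.refl A).smul_left a).smul_right b)

lemma mexp_smul_transpose {n : ℕ} (A : Matrix (Fin n) (Fin n) ℝ) (t : ℝ) :
    mexp (t • Aᵀ) = (mexp (t • A))ᵀ := by
  rw [← Matrix.transpose_smul]
  exact Matrix.exp_transpose _

section

attribute [local instance] Matrix.linftyOpNormedRing Matrix.linftyOpNormedAlgebra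

lemma continuous_mexp_smul {n : ℕ} (A : Matrix (Fin n) (Fin n) ℝ) :
    Continuous fun t : ℝ => mexp (t • A) :=
  NormedSpace.exp_continuous.comp (continuous_id.smul continuous_const)

end

lemma mexp_smul_mulVec_intervalIntegral {n : ℕ} (A : Matrix (Fin n) (Fin n) ℝ)
    (τ c a b : ℝ) (F : ℝ → Fin n → ℝ)
    (hF : IntervalIntegrable (fun s => mexp ((c - s) • A) *ᵥ F s) volume a b) :
    mexp (τ • A) *ᵥ ∫ s in a..b, mexp ((c - s) • A) *ᵥ F s =
      ∫ s in a..b, mexp ((τ + c - s) • A) *ᵥ F s := by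
  have := (mexp (τ • A)).mulVecLin.toContinuousLinearMap.intervalIntegral_comp_comm hF
  simp only [LinearMap.coe_toContinuousLinearMap', Matrix.mulVecLin_apply] at this
  simp only [← this, Matrix.mulVec_mulVec, ← mexp_add_smul, add_sub_assoc]

lemma intervalIntegrable_mexp_mulVec_sum_smul {n : ℕ} {ι : Type*} [Fintype ι]
    (A : Matrix (Fin n) (Fin n) ℝ) (c a b : ℝ) (B : ι → Fin n → ℝ) (u : ι → ℝ → ℝ)
    (hu : ∀ j, IntervalIntegrable (u j) volume a b) :
    IntervalIntegrable (fun s => mexp ((c - s) • A) *ᵥ ∑ j, u j s • B j) volume a b := by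
  have hcont (j : ι) : Continuous fun s => mexp ((c - s) • A) *ᵥ B j :=
    ((continuous_mexp_smul A).comp (continuous_const.sub continuous_id)).matrix_mulVec
      continuous_const
  have hsum : (fun s => mexp ((c - s) • A) *ᵥ ∑ j, u j s • B j) =
      ∑ j, fun s => u j s • (mexp ((c - s) • A) *ᵥ B j) := by
    ext s : 1
    simp [Matrix.mulVec_sum, Matrix.mulVec_smul]
  rw [hsum]
  exact IntervalIntegrable.sum _ fun j _ => (hu j).smul_continuousOn (hcont j).continuousOn

lemma AdmissibleD.intervalIntegrable {u : ℝ → ℝ} (hu : AdmissibleD u) (a b : ℝ) :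
    IntervalIntegrable u volume a b := by
  obtain ⟨hm, ⟨C, hC⟩, -⟩ := hu
  exact intervalIntegrable_iff.2 <| IntegrableOn.of_bound measure_Ioc_lt_top
    hm.aestronglyMeasurable C (ae_of_all _ hC)

lemma intervalIntegral_comp_sub_right_of_eq_zero_of_neg {E : Type*} [NormedAddCommGroup E]
    [NormedSpace ℝ E] {g : ℝ → E} (hg : ∀ s < 0, g s = 0) {τ b : ℝ} (hτ : 0 ≤ τ) (hb : τ ≤ b) :
    ∫ t in 0..b, g (t - τ) = ∫ t in 0..(b - τ), g t := by
  have hb' : 0 ≤ b - τ := sub_nonneg.2 hb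
  rw [intervalIntegral.integral_comp_sub_right, zero_sub,
    intervalIntegral.integral_of_le ((neg_nonpos.2 hτ).trans hb'),
    intervalIntegral.integral_of_le hb']
  refine setIntegral_eq_of_subset_of_ae_sdiff_eq_zero measurableSet_Ioc.nullMeasurableSet
    (Set.Ioc_subset_Ioc_left (neg_nonpos.2 hτ)) ?_
  filter_upwards [Measure.ae_ne volume 0] with s hs hmem
  exact hg s (lt_of_le_of_ne (not_lt.1 fun h => hmem.2 ⟨h, hmem.1.2⟩) hs)

lemma dotProduct_mulVec_sub_sub {m : Type*} [Fintype m] {M : Matrix m m ℝ} (hM : M.IsSymm)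
    (a b : m → ℝ) :
    (a - b) ⬝ᵥ M *ᵥ (a - b) = a ⬝ᵥ M *ᵥ a - 2 * (a ⬝ᵥ M *ᵥ b) + b ⬝ᵥ M *ᵥ b := by
  have hba : b ⬝ᵥ M *ᵥ a = a ⬝ᵥ M *ᵥ b := by
    rw [← dotProduct_transpose_mulVec, hM.eq]
  simp only [Matrix.mulVec_sub, sub_dotProduct, dotProduct_sub, hba]
  ring

lemma mulVec_dotProduct_mulVec_mulVec {m : Type*} [Fintype m] (E M : Matrix m m ℝ) (v w : m → ℝ) :
    E *ᵥ v ⬝ᵥ M *ᵥ (E *ᵥ w) = v ⬝ᵥ (Eᵀ * M * E) *ᵥ w := by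
  simp [Matrix.dotProduct_mulVec, ← Matrix.vecMul_vecMul, Matrix.vecMul_transpose]

namespace GameData

variable {n : ℕ} (G : GameData n)

lemma xtraj_eq_integral_shifted (x0 : Fin n → ℝ) (u : Fin n → ℝ → ℝ) (t : ℝ) :
    G.xtraj x0 u t = mexp (t • G.Λ) *ᵥ x0 +
      ∫ s in (-G.τ)..(t - G.τ), mexp ((t - G.τ - s) • G.Λ) *ᵥ ∑ j, u j s • G.B j := by
  rw [xtraj, ← zero_sub, ← intervalIntegral.integral_comp_sub_right]
  simp only [sub_sub_sub_cancel_right]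

lemma mexp_mulVec_xtraj_add_integral (x0 : Fin n → ℝ) (u : Fin n → ℝ → ℝ)
    (hu : ∀ j a b, IntervalIntegrable (u j) volume a b) (t : ℝ) :
    mexp (G.τ • G.Λ) *ᵥ (G.xtraj x0 u t +
        ∫ s in (t - G.τ)..t, mexp ((t - s - G.τ) • G.Λ) *ᵥ ∑ j, u j s • G.B j) =
      G.xtraj x0 u (t + G.τ) := by
  have hF (c a b : ℝ) := intervalIntegrable_mexp_mulVec_sum_smul G.Λ c a b G.B u (hu · a b)
  simp only [sub_right_comm t _ G.τ, xtraj_eq_integral_shifted, Matrix.mulVec_add,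
    Matrix.mulVec_mulVec, ← mexp_add_smul, mexp_smul_mulVec_intervalIntegral _ _ _ _ _ _ (hF _ _ _),
    add_assoc, intervalIntegral.integral_add_adjacent_intervals (hF _ _ _) (hF _ _ _),
    add_comm G.τ t, add_sub_cancel, add_sub_cancel_right]

end GameData

/-- For an admissible control profile `u` of the delayed game with trajectory `x_u` from
`x₀` and delay-free transform `y`, the stubborn cost satisfies
`J̃ᵢ(u) = (exp(τΛ)·y(T) − x₀)ᵀ·Wᵢ·(exp(τΛ)·y(T) − x₀) + ((1−ωᵢ)/dᵢ)·y(T)ᵀ·L̂ᵢ·y(T) + ∫₀ᵀ rᵢ uᵢ²`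
`= y(T)ᵀ·Ŵᵢ·y(T) − 2·y(T)ᵀ·exp(τΛᵀ)·Wᵢ·x₀ + x₀ᵀ·Wᵢ·x₀ + ((1−ωᵢ)/dᵢ)·y(T)ᵀ·L̂ᵢ·y(T) + ∫₀ᵀ rᵢ uᵢ²`. -/
theorem statement_4 {n : ℕ} (G : GameData n) (hG : G.Valid) (x0 : Fin n → ℝ)
    (u : Fin n → ℝ → ℝ) (hu : ∀ i, AdmissibleD (u i)) (y : ℝ → Fin n → ℝ)
    (hy : ∀ t, y t = G.xtraj x0 u t +
      ∫ s in (t - G.τ)..t,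
        (mexp ((t - s - G.τ) • G.Λ)).mulVec (∑ j : Fin n, u j s • G.B j)) :
    ∀ i,
      G.Jstub x0 i u =
        ((mexp (G.τ • G.Λ)).mulVec (y G.T) - x0) ⬝ᵥ
            (G.W i).mulVec ((mexp (G.τ • G.Λ)).mulVec (y G.T) - x0) +
          ((1 - G.ω i) / G.d i) * (y G.T ⬝ᵥ (G.Lhat i).mulVec (y G.T)) +
          ∫ t in (0:ℝ)..G.T, G.r i * u i t ^ 2 ∧
      G.Jstub x0 i u =
        y G.T ⬝ᵥ (G.What i).mulVec (y G.T) -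
          2 * (y G.T ⬝ᵥ (mexp (G.τ • G.Λᵀ)).mulVec ((G.W i).mulVec x0)) +
          x0 ⬝ᵥ (G.W i).mulVec x0 +
          ((1 - G.ω i) / G.d i) * (y G.T ⬝ᵥ (G.Lhat i).mulVec (y G.T)) +
          ∫ t in (0:ℝ)..G.T, G.r i * u i t ^ 2 := by
  intro i
  obtain ⟨hτ, hτtf, -⟩ := hG
  have hx : G.xtraj x0 u G.tf = mexp (G.τ • G.Λ) *ᵥ y G.T := by
    rw [hy, G.mexp_mulVec_xtraj_add_integral x0 u fun j => (hu j).intervalIntegrable,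
      GameData.T, sub_add_cancel]
  have hcost : ∫ t in 0..G.tf, G.r i * u i (t - G.τ) ^ 2 = ∫ t in 0..G.T, G.r i * u i t ^ 2 :=
    intervalIntegral_comp_sub_right_of_eq_zero_of_neg (g := fun s => G.r i * u i s ^ 2)
      (fun s hs => by simp [(hu i).2.2 s hs]) hτ hτtf.le
  have hJ : G.Jstub x0 i u =
      (mexp (G.τ • G.Λ) *ᵥ y G.T - x0) ⬝ᵥ G.W i *ᵥ (mexp (G.τ • G.Λ) *ᵥ y G.T - x0) +
        (1 - G.ω i) / G.d i * (y G.T ⬝ᵥ G.Lhat i *ᵥ y G.T) +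
        ∫ t in 0..G.T, G.r i * u i t ^ 2 := by
    rw [GameData.Jstub, hx, hcost, mulVec_dotProduct_mulVec_mulVec, ← mexp_smul_transpose,
      ← GameData.Lhat]
  refine ⟨hJ, hJ.trans ?_⟩
  have hW : (G.W i).IsSymm := Matrix.transpose_single _ _ _
  rw [dotProduct_mulVec_sub_sub hW, mulVec_dotProduct_mulVec_mulVec,
    ← mexp_smul_transpose, ← GameData.What, mexp_smul_transpose, dotProduct_transpose_mulVec,
    dotProduct_comm (G.W i *ᵥ x0)]
end
end

section
/- Suppose y : [0,T] → ℝⁿ satisfies the integral equation y(t) = exp(tΛ)·y_0 − ∑_{j=1}^n ( ∫₀ᵗ exp((t−s)Λ)·S_j·exp((T−s)Λᵀ) ds )·(1/d_j)·L̂_j·y(T) for all t ∈ [0,T]. Then H·y(T) = exp(TΛ)·y_0. Consequently, if H is invertible, then y(T) = H⁻¹·exp(TΛ)·y_0, and there is exactly one function y : [0,T] → ℝⁿ satisfying the integral equation. -/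
open Matrix MeasureTheory
open scoped Matrix

noncomputable section

namespace GameData

variable {n : ℕ} (G : GameData n)

theorem T_nonneg (hG : G.Valid) : 0 ≤ G.T :=
  sub_nonneg.2 hG.2.1.le

def IsIntegralSolution (y0 : Fin n → ℝ) (y : ℝ → Fin n → ℝ) : Prop :=
  ∀ t ∈ Set.Icc (0:ℝ) G.T, y t =
    (mexp (t • G.Λ)).mulVec y0 -
      ∑ j : Fin n, (G.Phi G.T j t).mulVec ((1 / G.d j) • (G.Lhat j).mulVec (y G.T))

theorem H_mulVec (v : Fin n → ℝ) :
    G.H.mulVec v = v + ∑ j : Fin n, (G.Phi G.T j G.T).mulVec ((1 / G.d j) • (G.Lhat j).mulVec v) := by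
  simp only [H, add_mulVec, one_mulVec, sum_mulVec, smul_mulVec, mulVec_smul, ← mulVec_mulVec]
  rfl

theorem H_mulVec_terminal_eq {y0 : Fin n → ℝ} {y : ℝ → Fin n → ℝ} (hT : 0 ≤ G.T)
    (hy : G.IsIntegralSolution y0 y) :
    G.H.mulVec (y G.T) = (mexp (G.T • G.Λ)).mulVec y0 := by
  rw [H_mulVec]
  exact eq_sub_iff_add_eq.1 (hy G.T ⟨hT, le_rfl⟩)

theorem IsIntegralSolution.eqOn_of_terminal_eq {y0 : Fin n → ℝ} {y z : ℝ → Fin n → ℝ}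
    (hy : G.IsIntegralSolution y0 y) (hz : G.IsIntegralSolution y0 z) (hzy : z G.T = y G.T) :
    ∀ t ∈ Set.Icc (0:ℝ) G.T, z t = y t := fun t ht => by
  rw [hz t ht, hy t ht, hzy]

end GameData

/-- If `y : [0,T] → ℝⁿ` satisfies the integral equation
`y(t) = exp(tΛ)·y₀ − ∑ⱼ (∫₀ᵗ exp((t−s)Λ)·Sⱼ·exp((T−s)Λᵀ) ds)·(1/dⱼ)·L̂ⱼ·y(T)`, then
`H·y(T) = exp(TΛ)·y₀`; consequently if `H` is invertible then `y(T) = H⁻¹·exp(TΛ)·y₀`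
and the solution of the integral equation is unique. -/
theorem statement_7 {n : ℕ} (G : GameData n) (hG : G.Valid) (y0 : Fin n → ℝ)
    (y : ℝ → Fin n → ℝ)
    (hy : ∀ t ∈ Set.Icc (0:ℝ) G.T, y t =
      (mexp (t • G.Λ)).mulVec y0 -
        ∑ j : Fin n, (G.Phi G.T j t).mulVec ((1 / G.d j) • (G.Lhat j).mulVec (y G.T))) :
    G.H.mulVec (y G.T) = (mexp (G.T • G.Λ)).mulVec y0 ∧
      (IsUnit G.H →
        y G.T = G.H⁻¹.mulVec ((mexp (G.T • G.Λ)).mulVec y0) ∧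
          ∀ z : ℝ → Fin n → ℝ,
            (∀ t ∈ Set.Icc (0:ℝ) G.T, z t =
              (mexp (t • G.Λ)).mulVec y0 -
                ∑ j : Fin n, (G.Phi G.T j t).mulVec
                  ((1 / G.d j) • (G.Lhat j).mulVec (z G.T))) →
            ∀ t ∈ Set.Icc (0:ℝ) G.T, z t = y t) := by
  have hT := G.T_nonneg hG
  have hHy := G.H_mulVec_terminal_eq hT hy
  refine ⟨hHy, fun hU => ?_⟩
  let _ := hU.invertible
  refine ⟨(inv_mulVec_eq_vec hHy.symm).symm, fun z hz => ?_⟩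
  have hzy : z G.T = y G.T :=
    mulVec_injective_iff_isUnit.2 hU ((G.H_mulVec_terminal_eq hT hz).trans hHy.symm)
  exact GameData.IsIntegralSolution.eqOn_of_terminal_eq G hy hz hzy
end
end
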